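/- arXiv:2501.16837 — 3 statements merged into one kernel-verified Lean document; each statement's English description precedes it below -/
import Mathlib

section
/- Let (p_k)_{k≥1} be a probability distribution on the positive integers with generating function h(s) = Σ_{k≥1} s^k p_k. Suppose there exists p₀ > 0 with lim_{k→∞} k² p_k = p₀. Then there exists C > 0 such that for all sufficiently small u ∈ (0,1), 0 ≤ (1-u) - h(1-u) ≤ C·(1 + log(1/u))·u·(1-u). Consequently, for every ε ∈ (0,1), ∫_{1-ε}^{1} ds/|h(s) - s| = ∞. -/
open Real Set Filter
open MeasureTheory Topology

/-! Write `s = 1 - u` and let `M` bound `k² p_k`. Since `∑ p_k = 1`,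
`s - h s = ∑ (s - s^k) p_k` with `(s - s^k) p_k ≤ s · min (k u, 1) · p_k ≤ s M min (u / k, 1 / k²)`.
Summing `u / k` up to `K = ⌊1/u⌋` gives `u (1 + log K)`, and `1 / k²` beyond `K` gives
at most `1 / K ≤ 2 u`. The integral diverges because `1 / ((1 + log (1/u)) u)` is the
derivative of `log (1 + log (1/u))`, which is unbounded as `u → 0`. -/

-- Lean's `x / 0 = 0⁻¹ = 0` makes the `k = 0` summand vanish, matching the sums from `k = 1`.
lemma sum_range_min_div_inv_sq_le (u : ℝ) (hu : 0 ≤ u) (K : ℕ) :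
    ∑ k ∈ Finset.range (K + 1), min (u / k) ((k : ℝ) ^ 2)⁻¹ ≤ u * (1 + log K) :=
  calc ∑ k ∈ Finset.range (K + 1), min (u / k) ((k : ℝ) ^ 2)⁻¹
      ≤ ∑ k ∈ Finset.range (K + 1), u * (k : ℝ)⁻¹ :=
        Finset.sum_le_sum fun k _ => (min_le_left _ _).trans_eq (div_eq_mul_inv _ _)
    _ = u * harmonic K := by
        rw [← Finset.mul_sum, Finset.sum_range_succ', harmonic]
        push_cast
        simp
    _ ≤ u * (1 + log K) := mul_le_mul_of_nonneg_left (harmonic_le_one_add_log K) hu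

lemma sum_Ioc_min_div_inv_sq_le (u : ℝ) {K : ℕ} (hK : K ≠ 0) (n : ℕ) :
    ∑ k ∈ Finset.Ioc K (K + n), min (u / k) ((k : ℝ) ^ 2)⁻¹ ≤ (K : ℝ)⁻¹ :=
  calc ∑ k ∈ Finset.Ioc K (K + n), min (u / k) ((k : ℝ) ^ 2)⁻¹
      ≤ ∑ k ∈ Finset.Ioc K (K + n), ((k : ℝ) ^ 2)⁻¹ :=
        Finset.sum_le_sum fun k _ => min_le_right _ _
    _ ≤ (K : ℝ)⁻¹ - ((K + n : ℕ) : ℝ)⁻¹ := sum_Ioc_inv_sq_le_sub hK (Nat.le_add_right K n)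
    _ ≤ (K : ℝ)⁻¹ := sub_le_self _ (by positivity)

lemma tsum_min_div_inv_sq_le {u : ℝ} (hu₀ : 0 < u) (hu₁ : u ≤ 1) :
    ∑' k : ℕ, min (u / k) ((k : ℝ) ^ 2)⁻¹ ≤ 3 * (1 + log (1 / u)) * u := by
  set K := ⌊1 / u⌋₊
  have hK : 1 ≤ K := Nat.le_floor (by rw [Nat.cast_one, le_div_iff₀ hu₀]; linarith)
  have hK_le : (K : ℝ) ≤ 1 / u := Nat.floor_le (by positivity)
  have hK_inv : (K : ℝ)⁻¹ ≤ 2 * u := by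
    have hK_one : (1 : ℝ) ≤ K := by exact_mod_cast hK
    have hK_gt : 1 / u < K + 1 := Nat.lt_floor_add_one (1 / u)
    rw [div_lt_iff₀ hu₀] at hK_gt
    rw [inv_le_iff_one_le_mul₀ (by positivity)]
    nlinarith
  have hlog : log K ≤ log (1 / u) := log_le_log (by positivity) hK_le
  have hlog₀ : 0 ≤ log (1 / u) := log_nonneg (by rw [le_div_iff₀ hu₀]; linarith)
  refine tsum_le_of_sum_range_le (fun k => le_min (by positivity) (by positivity)) fun n => ?_
  calc ∑ k ∈ Finset.range n, min (u / k) ((k : ℝ) ^ 2)⁻¹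
      ≤ ∑ k ∈ Finset.range (K + n + 1), min (u / k) ((k : ℝ) ^ 2)⁻¹ :=
        Finset.sum_le_sum_of_subset_of_nonneg (Finset.range_subset_range.2 (by omega))
          fun k _ _ => le_min (by positivity) (by positivity)
    _ = ∑ k ∈ Finset.range (K + 1), min (u / k) ((k : ℝ) ^ 2)⁻¹
          + ∑ k ∈ Finset.Ioc K (K + n), min (u / k) ((k : ℝ) ^ 2)⁻¹ := by
        rw [Finset.range_eq_Ico, Finset.range_eq_Ico, ← Finset.Ico_add_one_add_one_eq_Ioc,
          Finset.sum_Ico_consecutive _ (Nat.zero_le _) (by omega)]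
    _ ≤ u * (1 + log K) + (K : ℝ)⁻¹ :=
        add_le_add (sum_range_min_div_inv_sq_le u hu₀.le K)
          (sum_Ioc_min_div_inv_sq_le u (by omega) n)
    _ ≤ 3 * (1 + log (1 / u)) * u := by nlinarith

section GeneratingFunction

variable {p : ℕ → ℝ}

lemma summable_pow_mul (hpnn : ∀ k, 0 ≤ p k) (hsp : Summable p) {s : ℝ} (hs : s ∈ Icc 0 1) :
    Summable fun k => s ^ k * p k :=
  hsp.of_nonneg_of_le (fun k => mul_nonneg (pow_nonneg hs.1 k) (hpnn k))
    fun k => mul_le_of_le_one_left (hpnn k) (pow_le_one₀ hs.1 hs.2)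

lemma pow_mul_le_mul (hp0 : p 0 = 0) (hpnn : ∀ k, 0 ≤ p k) {s : ℝ}
    (hs : s ∈ Icc 0 1) (k : ℕ) : s ^ k * p k ≤ s * p k := by
  rcases k with _ | k
  · simp [hp0]
  · exact mul_le_mul_of_nonneg_right (pow_le_of_le_one hs.1 hs.2 k.succ_ne_zero) (hpnn _)

lemma tsum_pow_mul_lt_self (hpnn : ∀ k, 0 ≤ p k) (hsp : Summable p) (hp0 : p 0 = 0)
    (hsum : ∑' k, p k = 1) {k₀ : ℕ} (hk₀ : 2 ≤ k₀) (hpk₀ : 0 < p k₀) {x : ℝ} (hx : x ∈ Ioo 0 1) :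
    ∑' k, x ^ k * p k < x :=
  calc ∑' k, x ^ k * p k < ∑' k, x * p k :=
        Summable.tsum_lt_tsum (pow_mul_le_mul hp0 hpnn (Ioo_subset_Icc_self hx))
          (mul_lt_mul_of_pos_right (pow_lt_self_of_lt_one₀ hx.1 hx.2 (by omega)) hpk₀)
          (summable_pow_mul hpnn hsp (Ioo_subset_Icc_self hx)) (hsp.mul_left x)
    _ = x := by rw [tsum_mul_left, hsum, mul_one]

lemma sub_pow_mul_le (hpnn : ∀ k, 0 ≤ p k) {M : ℝ} (hM : ∀ k : ℕ, (k : ℝ) ^ 2 * p k ≤ M)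
    {u : ℝ} (hu : u ∈ Ioc 0 1) (k : ℕ) :
    ((1 - u) - (1 - u) ^ k) * p k ≤ (1 - u) * M * min (u / k) ((k : ℝ) ^ 2)⁻¹ := by
  obtain ⟨hu₀, hu₁⟩ := hu
  rcases k with _ | j
  · simpa using mul_nonpos_of_nonpos_of_nonneg (by linarith : (1 - u) - 1 ≤ 0) (hpnn 0)
  set k := j + 1
  have hk : (0 : ℝ) < k := by positivity
  have hM₀ : 0 ≤ M := by simpa using hM 0
  have hbernoulli : 1 - j * u ≤ (1 - u) ^ j := by
    simpa [sub_eq_add_neg] using one_add_mul_le_pow (by linarith : -2 ≤ -u) j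
  have hpow : 0 ≤ (1 - u) ^ j := pow_nonneg (by linarith) j
  rw [show (1 - u) - (1 - u) ^ k = (1 - u) * (1 - (1 - u) ^ j) by ring, mul_assoc, mul_assoc,
    mul_min_of_nonneg _ _ hM₀]
  refine mul_le_mul_of_nonneg_left (le_min ?_ ?_) (by linarith)
  · calc (1 - (1 - u) ^ j) * p k ≤ (k * u) * p k :=
          mul_le_mul_of_nonneg_right (by simp only [k]; push_cast; nlinarith) (hpnn k)
      _ = u * ((k : ℝ) ^ 2 * p k) / k := by field_simp
      _ ≤ u * M / k := by gcongr; exact hM k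
      _ = M * (u / k) := by ring
  · calc (1 - (1 - u) ^ j) * p k ≤ p k := mul_le_of_le_one_left (hpnn k) (by linarith)
      _ = (k : ℝ) ^ 2 * p k / (k : ℝ) ^ 2 := by field_simp
      _ ≤ M / (k : ℝ) ^ 2 := by gcongr; exact hM k
      _ = M * ((k : ℝ) ^ 2)⁻¹ := div_eq_mul_inv _ _

lemma sub_tsum_pow_mul_le (hpnn : ∀ k, 0 ≤ p k) (hsp : Summable p) (hsum : ∑' k, p k = 1)
    {M : ℝ} (hM : ∀ k : ℕ, (k : ℝ) ^ 2 * p k ≤ M) {u : ℝ} (hu : u ∈ Ioc 0 1) :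
    (1 - u) - ∑' k, (1 - u) ^ k * p k ≤ 3 * M * (1 + log (1 / u)) * u * (1 - u) := by
  have hM₀ : 0 ≤ M := by simpa using hM 0
  have hs : 1 - u ∈ Icc 0 1 := ⟨by linarith [hu.2], by linarith [hu.1]⟩
  have hmin : Summable fun k : ℕ => min (u / k) ((k : ℝ) ^ 2)⁻¹ :=
    (Real.summable_nat_pow_inv.2 one_lt_two).of_nonneg_of_le
      (fun k => le_min (div_nonneg hu.1.le k.cast_nonneg) (by positivity)) fun k => min_le_right _ _
  have hdiff : HasSum (fun k => ((1 - u) - (1 - u) ^ k) * p k)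
      ((1 - u) - ∑' k, (1 - u) ^ k * p k) := by
    simpa only [sub_mul, hsum, mul_one] using
      (hsp.hasSum.mul_left (1 - u)).sub (summable_pow_mul hpnn hsp hs).hasSum
  calc (1 - u) - ∑' k, (1 - u) ^ k * p k = ∑' k, ((1 - u) - (1 - u) ^ k) * p k :=
        hdiff.tsum_eq.symm
    _ ≤ ∑' k : ℕ, (1 - u) * M * min (u / k) ((k : ℝ) ^ 2)⁻¹ :=
        Summable.tsum_le_tsum (sub_pow_mul_le hpnn hM hu) hdiff.summable (hmin.mul_left _)
    _ = (1 - u) * M * ∑' k : ℕ, min (u / k) ((k : ℝ) ^ 2)⁻¹ := tsum_mul_left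
    _ ≤ (1 - u) * M * (3 * (1 + log (1 / u)) * u) :=
        mul_le_mul_of_nonneg_left (tsum_min_div_inv_sq_le hu.1 hu.2) (mul_nonneg hs.1 hM₀)
    _ = 3 * M * (1 + log (1 / u)) * u * (1 - u) := by ring

end GeneratingFunction

lemma hasDerivAt_log_one_add_log_one_div_sub {s : ℝ} (hs : s ∈ Ioo 0 1) :
    HasDerivAt (fun t => log (1 + log (1 / (1 - t))))
      ((1 + log (1 / (1 - s))) * (1 - s))⁻¹ s := by
  have hu : 0 < 1 - s := by linarith [hs.2]
  have hL : 0 < 1 + log (1 / (1 - s)) := by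
    have := log_nonneg (one_le_one_div hu (by linarith [hs.1])); linarith
  have h₁ : HasDerivAt (fun t => log (1 / (1 - t))) (1 / (1 - s)) s := by
    simpa [neg_div] using (((hasDerivAt_id s).const_sub 1).log hu.ne').fun_neg
  convert (h₁.const_add 1).log hL.ne' using 1
  field_simp

lemma tendsto_log_one_add_log_one_div_sub :
    Tendsto (fun t => log (1 + log (1 / (1 - t)))) (𝓝[<] 1) atTop := by
  have h₀ : Tendsto (fun t => 1 - t) (𝓝[<] (1 : ℝ)) (𝓝[>] 0) := by
    have := (Filter.map_subLeft_nhdsLT (c := (1 : ℝ)) (a := 1)).le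
    rwa [sub_self] at this
  refine tendsto_log_atTop.comp (tendsto_atTop_add_const_left _ 1 ?_)
  simp only [one_div, log_inv]
  exact tendsto_neg_atBot_atTop.comp (tendsto_log_nhdsGT_zero.comp h₀)

lemma not_integrableOn_inv_one_add_log_one_div_sub_mul {a : ℝ} (ha : a < 1) :
    ¬ IntegrableOn (fun s => ((1 + log (1 / (1 - s))) * (1 - s))⁻¹) (Ioo a 1) := by
  have hderiv : ∀ᶠ s in 𝓝[<] 1, HasDerivAt (fun t => log (1 + log (1 / (1 - t))))
      ((1 + log (1 / (1 - s))) * (1 - s))⁻¹ s :=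
    eventually_of_mem (Ioo_mem_nhdsLT one_pos) fun _ hs =>
      hasDerivAt_log_one_add_log_one_div_sub hs
  exact not_integrableOn_of_tendsto_norm_atTop_of_deriv_isBigO_filter (𝓝[<] 1) (Ioo_mem_nhdsLT ha)
    (hderiv.mono fun s hs => hs.differentiableAt)
    (tendsto_norm_atTop_atTop.comp tendsto_log_one_add_log_one_div_sub)
    (EventuallyEq.isBigO (hderiv.mono fun s hs => hs.deriv))

lemma lintegral_ofReal_one_div_eq_top {φ : ℝ → ℝ} {a c : ℝ} (ha : a < 1) (hc : 0 < c)
    (hφ : ∀ s ∈ Ioo a 1, 0 < φ s ∧ φ s ≤ c * (1 + log (1 / (1 - s))) * (1 - s)) :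
    ∫⁻ s in Ioo a 1, ENNReal.ofReal (1 / φ s) = ⊤ := by
  set g : ℝ → ℝ := fun s => ((1 + log (1 / (1 - s))) * (1 - s))⁻¹
  have hg : ∀ s ∈ Ioo a 1, 0 ≤ c⁻¹ * g s ∧ c⁻¹ * g s ≤ 1 / φ s := by
    intro s hs
    obtain ⟨hφ₀, hφc⟩ := hφ s hs
    have hpos : 0 < c * ((1 + log (1 / (1 - s))) * (1 - s)) :=
      mul_assoc c _ _ ▸ hφ₀.trans_le hφc
    refine ⟨?_, ?_⟩
    · exact mul_nonneg (inv_nonneg.2 hc.le) (inv_nonneg.2 (pos_of_mul_pos_right hpos hc.le).le)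
    · calc c⁻¹ * g s = 1 / (c * (1 + log (1 / (1 - s))) * (1 - s)) := by
            simp only [g]; field_simp
        _ ≤ 1 / φ s := one_div_le_one_div_of_le hφ₀ hφc
  by_contra hfin
  refine not_integrableOn_inv_one_add_log_one_div_sub_mul ha ?_
  have hint : IntegrableOn (fun s => c⁻¹ * g s) (Ioo a 1) := by
    refine (lintegral_ofReal_ne_top_iff_integrable (by fun_prop)
      (ae_restrict_of_forall_mem measurableSet_Ioo fun s hs => (hg s hs).1)).1 ?_
    exact ne_top_of_le_ne_top hfin (setLIntegral_mono' measurableSet_Ioo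
      fun s hs => ENNReal.ofReal_le_ofReal (hg s hs).2)
  have := hint.const_mul c
  simp only [mul_inv_cancel_left₀ hc.ne'] at this
  exact this

theorem stmt3 (p : ℕ → ℝ) (hp0 : p 0 = 0) (hpnn : ∀ k, 0 ≤ p k)
    (hsum : ∑' k, p k = 1)
    (h : ℝ → ℝ) (hh : ∀ s, h s = ∑' k, s ^ k * p k)
    (p₀ : ℝ) (hp₀ : 0 < p₀)
    (hlim : Tendsto (fun k : ℕ => (k:ℝ)^2 * p k) atTop (nhds p₀)) :
    (∃ C > (0:ℝ), ∃ u₀ ∈ Set.Ioo (0:ℝ) 1, ∀ u ∈ Set.Ioo (0:ℝ) u₀,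
      0 ≤ (1-u) - h (1-u) ∧
      (1-u) - h (1-u) ≤ C * (1 + Real.log (1/u)) * u * (1-u)) ∧
    ∀ ε ∈ Set.Ioo (0:ℝ) 1,
      ∫⁻ s in Set.Ioo (1-ε) 1, ENNReal.ofReal (1/|h s - s|) = ⊤ := by
  have hsp : Summable p := by
    by_contra hns
    simp [tsum_eq_zero_of_not_summable hns] at hsum
  obtain ⟨k₀, hk₀, hpk₀⟩ : ∃ k : ℕ, 2 ≤ k ∧ 0 < (k : ℝ) ^ 2 * p k :=
    ((eventually_ge_atTop 2).and (hlim.eventually_const_lt hp₀)).exists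
  obtain ⟨M, hM⟩ := hlim.bddAbove_range
  have hM : ∀ k : ℕ, (k : ℝ) ^ 2 * p k ≤ M := fun k => hM (mem_range_self k)
  have hM₀ : 0 < M := hpk₀.trans_le (hM k₀)
  have hlt : ∀ s ∈ Ioo (0 : ℝ) 1, h s < s := fun s hs =>
    hh s ▸ tsum_pow_mul_lt_self hpnn hsp hp0 hsum hk₀
      (pos_of_mul_pos_right hpk₀ (by positivity)) hs
  have hle : ∀ u ∈ Ioc (0 : ℝ) 1,
      (1 - u) - h (1 - u) ≤ 3 * M * (1 + log (1 / u)) * u * (1 - u) :=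
    fun u hu => hh (1 - u) ▸ sub_tsum_pow_mul_le hpnn hsp hsum hM hu
  refine ⟨⟨3 * M, by positivity, 1 / 2, by norm_num,
      fun u hu => ⟨?_, hle u ⟨hu.1, by linarith [hu.2]⟩⟩⟩,
    fun ε hε => lintegral_ofReal_one_div_eq_top (by linarith [hε.1]) (by positivity : 0 < 3 * M)
      fun s hs => ?_⟩
  · exact (sub_pos.2 (hlt (1 - u) ⟨by linarith [hu.2], by linarith [hu.1]⟩)).le
  · have hs₀₁ : s ∈ Ioo (0 : ℝ) 1 := ⟨by linarith [hε.2, hs.1], hs.2⟩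
    have hpos : 0 < s - h s := sub_pos.2 (hlt s hs₀₁)
    have hbound := hle (1 - s) ⟨by linarith [hs.2], by linarith [hs₀₁.1]⟩
    rw [sub_sub_cancel] at hbound
    rw [abs_sub_comm, abs_of_pos hpos]
    exact ⟨hpos, hbound.trans (mul_le_of_le_one_right
      (pos_of_mul_pos_left (hpos.trans_le hbound) hs₀₁.1.le).le hs₀₁.2.le)⟩
end

section
/- Let (p_k)_{k≥1} be a probability distribution on positive integers with lim_{k→∞} k² p_k = p₀ > 0, let b, c, d > 0, and set n* = b·p₀/c. Let (b_K)_{K≥1} be a sequence of positive integers with log(b_K)/log(K) → γ ∈ (0,∞) as K → ∞. Then (1/(c·log K))·(b·Σ_{k=1}^{b_K} k·p_k - d) converges to γ·n* as K → ∞. -/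
/-!
Since `k² p_k → p₀`, we have `k p_k = p₀ / k + o(1 / k)`. The error terms sum to `o(H_n)`, and
`H_n ~ log n`, so `∑_{k ≤ n} k p_k = p₀ log n + o(log n)`. Because `log b_K ~ γ log K` forces
`b_K → ∞`, evaluating at `n = b_K` gives `∑_{k ≤ b_K} k p_k / log K → γ p₀`, while the constant `d`
vanishes after division by `log K`.
-/

open Real Set Filter
open Finset Asymptotics Topology

theorem sum_Icc_one_eq_sum_range_succ {M : Type*} [AddCommMonoid M] (a : ℕ → M) (n : ℕ) :
    ∑ k ∈ Icc 1 n, a k = ∑ i ∈ range n, a (i + 1) := by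
  rw [← Finset.Ico_add_one_right_eq_Icc, sum_Ico_eq_sum_range]
  simp only [add_comm, add_tsub_cancel_right]

theorem tendsto_log_natCast_atTop : Tendsto (fun n : ℕ => log n) atTop atTop :=
  tendsto_log_atTop.comp tendsto_natCast_atTop_atTop

theorem tendsto_harmonic_div_log :
    Tendsto (fun n : ℕ => (harmonic n : ℝ) / log n) atTop (𝓝 1) := by
  have h := (tendsto_harmonic_sub_log.div_atTop tendsto_log_natCast_atTop).add_const 1
  rw [zero_add] at h
  refine h.congr' ?_
  filter_upwards [tendsto_log_natCast_atTop.eventually_ne_atTop 0] with n hn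
  field_simp
  ring

theorem tendsto_sum_Icc_div_log_of_tendsto_mul {a : ℕ → ℝ} {L : ℝ}
    (h : Tendsto (fun k : ℕ => k * a k) atTop (𝓝 L)) :
    Tendsto (fun n : ℕ => (∑ k ∈ Icc 1 n, a k) / log n) atTop (𝓝 L) := by
  have hharm (n : ℕ) : (harmonic n : ℝ) = ∑ i ∈ range n, ((i : ℝ) + 1)⁻¹ := by
    simp [harmonic]
  have herr : (fun k : ℕ => a (k + 1) - L * ((k : ℝ) + 1)⁻¹) =o[atTop]
      fun k : ℕ => ((k : ℝ) + 1)⁻¹ := by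
    have h1 : (fun k : ℕ => ((k : ℝ) + 1) * a (k + 1) - L) =o[atTop] fun _ => (1 : ℝ) :=
      (isLittleO_one_iff ℝ).2 <| by
        simpa using (h.comp (tendsto_add_atTop_nat 1)).sub_const L
    refine (h1.mul_isBigO (isBigO_refl (fun k : ℕ => ((k : ℝ) + 1)⁻¹) atTop)).congr
      (fun k => ?_) (fun k => one_mul _)
    field_simp
  have hsum : (fun n : ℕ => ∑ k ∈ Icc 1 n, a k - L * harmonic n) =o[atTop]
      fun n : ℕ => (harmonic n : ℝ) := by
    refine (herr.sum_range (fun k => by positivity) ?_).congr (fun n => ?_) (fun n => ?_)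
    · simpa only [one_div] using Real.tendsto_sum_range_one_div_nat_succ_atTop
    · rw [sum_Icc_one_eq_sum_range_succ, hharm, mul_sum, sum_sub_distrib]
    · rw [hharm]
  have hlog : (fun n : ℕ => (harmonic n : ℝ)) =O[atTop] fun n : ℕ => log n :=
    (isEquivalent_of_tendsto_one tendsto_harmonic_div_log).isBigO
  have h2 := (hsum.trans_isBigO hlog).tendsto_div_nhds_zero.add
    (tendsto_harmonic_div_log.const_mul L)
  rw [zero_add, mul_one] at h2
  exact h2.congr fun n => by ring

theorem tendsto_atTop_of_tendsto_log_div_log {m : ℕ → ℕ} {γ : ℝ} (hγ : 0 < γ)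
    (h : Tendsto (fun K : ℕ => log (m K) / log K) atTop (𝓝 γ)) :
    Tendsto m atTop atTop := by
  have hlog : Tendsto (fun K : ℕ => log (m K)) atTop atTop := by
    refine (h.pos_mul_atTop hγ tendsto_log_natCast_atTop).congr' ?_
    filter_upwards [tendsto_log_natCast_atTop.eventually_ne_atTop 0] with K hK
    exact div_mul_cancel₀ _ hK
  rw [← tendsto_natCast_atTop_iff (R := ℝ)]
  exact tendsto_atTop_mono (fun K => log_le_self (Nat.cast_nonneg _)) hlog

theorem Filter.Tendsto.comp_div_log {f : ℕ → ℝ} {m : ℕ → ℕ} {L γ : ℝ}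
    (hf : Tendsto (fun n : ℕ => f n / Real.log n) atTop (𝓝 L)) (hγ : 0 < γ)
    (hm : Tendsto (fun K : ℕ => Real.log (m K) / Real.log K) atTop (𝓝 γ)) :
    Tendsto (fun K : ℕ => f (m K) / Real.log K) atTop (𝓝 (L * γ)) := by
  have hm_atTop := tendsto_atTop_of_tendsto_log_div_log hγ hm
  refine ((hf.comp hm_atTop).mul hm).congr' ?_
  filter_upwards [(tendsto_log_natCast_atTop.comp hm_atTop).eventually_ne_atTop 0] with K hK
  exact div_mul_div_cancel₀ hK

theorem stmt5_general (p : ℕ → ℝ) (p₀ b c d : ℝ)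
    (hlim : Tendsto (fun k : ℕ => (k:ℝ)^2 * p k) atTop (nhds p₀))
    (nstar : ℝ) (hnstar : nstar = b * p₀ / c)
    (bK : ℕ → ℕ) (γ : ℝ) (hγ : 0 < γ)
    (hloglim : Tendsto (fun K : ℕ => Real.log (bK K) / Real.log K) atTop (nhds γ)) :
    Tendsto (fun K : ℕ => (1 / (c * Real.log K)) *
      (b * ∑ k ∈ Finset.Icc 1 (bK K), (k:ℝ) * p k - d)) atTop (nhds (γ * nstar)) := by
  have hsum : Tendsto (fun n : ℕ => (∑ k ∈ Icc 1 n, (k : ℝ) * p k) / log n) atTop (𝓝 p₀) :=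
    tendsto_sum_Icc_div_log_of_tendsto_mul <| by simpa only [sq, mul_assoc] using hlim
  have hinv : Tendsto (fun K : ℕ => (log K)⁻¹) atTop (𝓝 0) :=
    tendsto_inv_atTop_zero.comp tendsto_log_natCast_atTop
  have h := ((hsum.comp_div_log hγ hloglim).const_mul (b / c)).sub (hinv.const_mul (d / c))
  rw [mul_zero, sub_zero] at h
  rw [hnstar]
  convert h using 2 <;> ring

theorem stmt5 (p : ℕ → ℝ) (hp0 : p 0 = 0) (hpnn : ∀ k, 0 ≤ p k)
    (hsum : ∑' k, p k = 1)
    (p₀ b c d : ℝ) (hp₀ : 0 < p₀) (hb : 0 < b) (hc : 0 < c) (hd : 0 < d)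
    (hlim : Tendsto (fun k : ℕ => (k:ℝ)^2 * p k) atTop (nhds p₀))
    (nstar : ℝ) (hnstar : nstar = b * p₀ / c)
    (bK : ℕ → ℕ) (hbK : ∀ K, 1 ≤ bK K)
    (γ : ℝ) (hγ : 0 < γ)
    (hloglim : Tendsto (fun K : ℕ => Real.log (bK K) / Real.log K) atTop (nhds γ)) :
    Tendsto (fun K : ℕ => (1 / (c * Real.log K)) *
      (b * ∑ k ∈ Finset.Icc 1 (bK K), (k:ℝ) * p k - d)) atTop (nhds (γ * nstar)) :=
  stmt5_general p p₀ b c d hlim nstar hnstar bK γ hγ hloglim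
end

section
/- Let 𝒳 be a compact metric space, ρ a probability measure on 𝒳, φ : 𝒳 → ℝ continuous, f : ℝ → ℝ twice continuously differentiable with bounded second derivative, and n > 0, y ≥ -1 with n + y > 0. Define Θ_{n,y}F(ρ) = ∫_𝒳 ( f( (n·⟨ρ,φ⟩ + y·φ(x))/(n+y) ) - f(⟨ρ,φ⟩) ) ρ(dx). Then |Θ_{n,y}F(ρ)| ≤ ‖f''‖_∞ · ‖φ‖_∞² · (y/(n+y))². -/
open Set MeasureTheory ProbabilityTheory

/-!
Write `m = ⟨ρ, φ⟩` and `c = y / (n + y)`, so that the argument of `f` is `m + c (φ x - m)`.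
Subtracting the first-order Taylor term `f'(m) c (φ x - m)`, which has mean zero, leaves a
remainder bounded by `‖f''‖_∞ c² (φ x - m)²`; its integral is `‖f''‖_∞ c² Var(φ)`, and a
variable with values in `[-M, M]` has variance at most `M²`.
-/

theorem abs_sub_sub_deriv_mul_le {f : ℝ → ℝ} (hf : Differentiable ℝ f)
    (hf' : Differentiable ℝ (deriv f)) {B : ℝ} (hB : ∀ t, |deriv (deriv f) t| ≤ B) (a h : ℝ) :
    |f (a + h) - f a - deriv f a * h| ≤ B * h ^ 2 := by
  have hlip : ∀ t, |deriv f t - deriv f a| ≤ B * |t - a| := fun t => by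
    simpa only [Real.norm_eq_abs] using Convex.norm_image_sub_le_of_norm_deriv_le
      (fun x _ => hf' x) (fun x _ => hB x) convex_univ (mem_univ a) (mem_univ t)
  have hg : ∀ t, HasDerivAt (fun t => f t - deriv f a * t) (deriv f t - deriv f a) t := fun t =>
    (hf t).hasDerivAt.sub (by simpa using (hasDerivAt_id t).const_mul (deriv f a))
  have hmvt := Convex.norm_image_sub_le_of_norm_deriv_le (s := Metric.closedBall a |h|)
    (C := B * |h|) (fun x _ => (hg x).differentiableAt)
    (fun x hx => by
      rw [(hg x).deriv, Real.norm_eq_abs]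
      have hxa : |x - a| ≤ |h| := by simpa [Real.dist_eq] using hx
      exact (hlip x).trans (mul_le_mul_of_nonneg_left hxa ((abs_nonneg _).trans (hB 0))))
    (convex_closedBall a |h|) (Metric.mem_closedBall_self (abs_nonneg h))
    (show a + h ∈ Metric.closedBall a |h| by simp)
  calc |f (a + h) - f a - deriv f a * h|
      = ‖(f (a + h) - deriv f a * (a + h)) - (f a - deriv f a * a)‖ := by
        rw [Real.norm_eq_abs]; ring_nf
    _ ≤ B * |h| * ‖a + h - a‖ := hmvt
    _ = B * h ^ 2 := by rw [add_sub_cancel_left, Real.norm_eq_abs, mul_assoc, abs_mul_abs_self, sq]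

theorem abs_integral_sub_le_mul_variance {Ω : Type*} [MeasurableSpace Ω] {μ : Measure Ω}
    [IsProbabilityMeasure μ] {φ : Ω → ℝ} (hφ : MemLp φ 2 μ) {f : ℝ → ℝ}
    (hf : Differentiable ℝ f) (hf' : Differentiable ℝ (deriv f)) {B : ℝ}
    (hB : ∀ t, |deriv (deriv f) t| ≤ B) (c : ℝ) :
    |∫ x, (f (μ[φ] + c * (φ x - μ[φ])) - f μ[φ]) ∂μ| ≤ B * c ^ 2 * Var[φ; μ] := by
  set m := μ[φ]
  set R := fun x => f (m + c * (φ x - m)) - f m - deriv f m * (c * (φ x - m))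
  have hR_le : ∀ x, |R x| ≤ B * c ^ 2 * (φ x - m) ^ 2 := fun x => by
    simpa only [mul_pow, mul_assoc] using abs_sub_sub_deriv_mul_le hf hf' hB m (c * (φ x - m))
  have hsq : Integrable (fun x => (φ x - m) ^ 2) μ := (hφ.sub (memLp_const m)).integrable_sq
  have hR : Integrable R μ := by
    refine (hsq.const_mul (B * c ^ 2)).mono' ?_ (.of_forall hR_le)
    have hφ_meas := hφ.aestronglyMeasurable
    have hf_cont := hf.continuous
    fun_prop
  have hlin : ∫ x, deriv f m * (c * (φ x - m)) ∂μ = 0 := by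
    rw [integral_const_mul, integral_const_mul,
      integral_sub (hφ.integrable one_le_two) (integrable_const m)]
    simp [m]
  have hlin_int : Integrable (fun x => deriv f m * (c * (φ x - m))) μ :=
    (((hφ.integrable one_le_two).sub (integrable_const m)).const_mul c).const_mul _
  have hsplit : ∫ x, (f (m + c * (φ x - m)) - f m) ∂μ = ∫ x, R x ∂μ := by
    have hdecomp : ∀ x, f (m + c * (φ x - m)) - f m = R x + deriv f m * (c * (φ x - m)) :=
      fun x => by simp only [R]; ring
    simp_rw [hdecomp]
    rw [integral_add hR hlin_int, hlin, add_zero]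
  calc |∫ x, (f (m + c * (φ x - m)) - f m) ∂μ|
      ≤ ∫ x, |R x| ∂μ := hsplit ▸ abs_integral_le_integral_abs
    _ ≤ ∫ x, B * c ^ 2 * (φ x - m) ^ 2 ∂μ :=
        integral_mono hR.abs (hsq.const_mul _) hR_le
    _ = B * c ^ 2 * Var[φ; μ] := by
        rw [integral_const_mul, variance_eq_integral hφ.aestronglyMeasurable.aemeasurable]

theorem stmt7_general {X : Type*} [MeasurableSpace X] [MetricSpace X]
    [BorelSpace X]
    (ρ : Measure X) [IsProbabilityMeasure ρ]
    (φ : X → ℝ) (hφ : Continuous φ)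
    (f : ℝ → ℝ) (hf : ContDiff ℝ 2 f)
    (B M : ℝ) (hB : ∀ t, |deriv (deriv f) t| ≤ B) (hM : ∀ x, |φ x| ≤ M)
    (n y : ℝ) (hny : 0 < n + y) :
    |∫ x, (f ((n * (∫ z, φ z ∂ρ) + y * φ x) / (n + y)) - f (∫ z, φ z ∂ρ)) ∂ρ|
      ≤ B * M^2 * (y/(n+y))^2 := by
  set m := ∫ z, φ z ∂ρ
  have harg : ∀ x, (n * m + y * φ x) / (n + y) = m + y / (n + y) * (φ x - m) := fun x => by
    field_simp
    ring
  have hφm := hφ.measurable.aestronglyMeasurable (μ := ρ)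
  have hvar : Var[φ; ρ] ≤ M ^ 2 := by
    simpa using variance_le_sq_of_bounded (a := -M) (b := M)
      (.of_forall fun x => abs_le.mp (hM x)) hφm.aemeasurable
  have hf' : ContDiff ℝ 1 (deriv f) := (contDiff_succ_iff_deriv.mp hf).2.2
  simp_rw [harg]
  calc _ ≤ B * (y / (n + y)) ^ 2 * Var[φ; ρ] :=
        abs_integral_sub_le_mul_variance (MemLp.of_bound hφm M (.of_forall hM))
          (hf.differentiable two_ne_zero) (hf'.differentiable one_ne_zero) hB _
    _ ≤ B * (y / (n + y)) ^ 2 * M ^ 2 :=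
        mul_le_mul_of_nonneg_left hvar (mul_nonneg ((abs_nonneg _).trans (hB 0)) (sq_nonneg _))
    _ = B * M ^ 2 * (y / (n + y)) ^ 2 := by ring

theorem stmt7 {X : Type*} [MeasurableSpace X] [MetricSpace X] [CompactSpace X]
    [BorelSpace X]
    (ρ : Measure X) [IsProbabilityMeasure ρ]
    (φ : X → ℝ) (hφ : Continuous φ)
    (f : ℝ → ℝ) (hf : ContDiff ℝ 2 f)
    (B M : ℝ) (hB : ∀ t, |deriv (deriv f) t| ≤ B) (hM : ∀ x, |φ x| ≤ M)
    (n y : ℝ) (hn : 0 < n) (hy : -1 ≤ y) (hny : 0 < n + y) :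
    |∫ x, (f ((n * (∫ z, φ z ∂ρ) + y * φ x) / (n + y)) - f (∫ z, φ z ∂ρ)) ∂ρ|
      ≤ B * M^2 * (y/(n+y))^2 :=
  stmt7_general ρ φ hφ f hf B M hB hM n y hny
end
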